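/- Every Vénéreau-type polynomial f = y + xQ with Q ∈ ℂ[x][v,w] is a ℂ[x]-hyperplane: ℂ[x][y,z,u]/(f) is ℂ[x]-isomorphic to a polynomial ring in two variables over ℂ[x]. -/

import Mathlib

/-!
Write `Q = q(v, w)` and `ν_c(s, t) = (s + c P, t + 2 s P + c P²)`, `P = s² - c t`, for the Nagata
automorphism of the plane. Modulo `f` we have `y = -x Q`, so `p = z² - Q · x u`, and
`(s, t) := ν_Q⁻¹(z, x u)` satisfies `v = x s`, `w = x t`; hence `Q = q(x s, x t)` and the
hypersurface is `x u = (ν_{q(x s, x t)}(s, t))₂`. As `q(x s, x t) ≡ c := q(0, 0) mod x`, this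
second coordinate is `(ν_c(s, t))₂ + x N(s, t)` for some polynomial `N`, so with
`a := (ν_c(s, t))₁` and `b := u - N(s, t)` the hypersurface becomes `(a, x b) = ν_c(s, t)`. This
can be solved for `(s, t)` given `(a, b)`, so `a` and `b` are free coordinates on the hypersurface.
-/

open MvPolynomial

section Nagata

variable {S T : Type*} [CommRing S] [CommRing T]

/-- The exponential of the locally nilpotent derivation `P (c ∂ₛ + 2 s ∂ₜ)`, which fixes
`P = s² - c t`. -/
def nagata (c : S) (st : S × S) : S × S :=
  (st.1 + c * (st.1 ^ 2 - c * st.2),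
    st.2 + 2 * st.1 * (st.1 ^ 2 - c * st.2) + c * (st.1 ^ 2 - c * st.2) ^ 2)

def nagataInv (c : S) (st : S × S) : S × S :=
  (st.1 - c * (st.1 ^ 2 - c * st.2),
    st.2 - 2 * st.1 * (st.1 ^ 2 - c * st.2) + c * (st.1 ^ 2 - c * st.2) ^ 2)

theorem nagata_nagataInv (c : S) (st : S × S) : nagata c (nagataInv c st) = st := by
  ext <;> simp only [nagata, nagataInv] <;> ring

theorem nagataInv_nagata (c : S) (st : S × S) : nagataInv c (nagata c st) = st := by
  ext <;> simp only [nagata, nagataInv] <;> ring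

theorem map_nagata_fst {F : Type*} [FunLike F S T] [RingHomClass F S T] (f : F) (c : S)
    (st : S × S) : f (nagata c st).1 = (nagata (f c) (Prod.map f f st)).1 := by
  simp [nagata]

theorem map_nagata_snd {F : Type*} [FunLike F S T] [RingHomClass F S T] (f : F) (c : S)
    (st : S × S) : f (nagata c st).2 = (nagata (f c) (Prod.map f f st)).2 := by
  simp [nagata, map_ofNat]

theorem map_nagataInv {F : Type*} [FunLike F S T] [RingHomClass F S T] (f : F) (c : S)
    (st : S × S) : Prod.map f f (nagataInv c st) = nagataInv (f c) (Prod.map f f st) := by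
  ext <;> simp [nagataInv, map_ofNat]

theorem sub_dvd_nagata_snd_sub (c d : S) (st : S × S) :
    c - d ∣ (nagata c st).2 - (nagata d st).2 :=
  ⟨-2 * st.1 * st.2 + (st.1 ^ 2 - c * st.2) ^ 2
    - d * st.2 * ((st.1 ^ 2 - c * st.2) + (st.1 ^ 2 - d * st.2)), by simp only [nagata]; ring⟩

end Nagata

section Venereau

variable {S : Type*} [CommRing S]

def venereauV (x y z u : S) : S := x * z + y * (y * u + z ^ 2)

def venereauW (x y z u : S) : S :=
  x ^ 2 * u - 2 * x * z * (y * u + z ^ 2) - y * (y * u + z ^ 2) ^ 2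

theorem venereauV_eq_of_eq_neg_mul {x y z u k : S} (hy : y = -(x * k)) :
    venereauV x y z u = x * (nagataInv k (z, x * u)).1 := by
  subst hy; simp only [venereauV, nagataInv]; ring

theorem venereauW_eq_of_eq_neg_mul {x y z u k : S} (hy : y = -(x * k)) :
    venereauW x y z u = x * (nagataInv k (z, x * u)).2 := by
  subst hy; simp only [venereauW, nagataInv]; ring

end Venereau

noncomputable section Correspondence

variable {R S T : Type*} [CommRing R] [CommRing S] [CommRing T] [Algebra R S] [Algebra R T]

def evalPair (p : MvPolynomial (Fin 2) R) (st : S × S) : S := aeval ![st.1, st.2] p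

theorem map_evalPair (F : S →ₐ[R] T) (p : MvPolynomial (Fin 2) R) (st : S × S) :
    F (evalPair p st) = evalPair p (Prod.map F F st) := by
  rw [evalPair, comp_aeval_apply, evalPair]
  congr 2
  funext i
  fin_cases i <;> rfl

variable (x : R) (q N : MvPolynomial (Fin 2) R)

def venereauQ (g : Fin 3 → S) : S :=
  evalPair q (venereauV (algebraMap R S x) (g 0) (g 1) (g 2),
    venereauW (algebraMap R S x) (g 0) (g 1) (g 2))

def venereauEval (g : Fin 3 → S) : S := g 0 + algebraMap R S x * venereauQ x q g

def venereauPoly : MvPolynomial (Fin 3) R := venereauEval x q X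

def venereauST (g : Fin 3 → S) : S × S :=
  nagataInv (venereauQ x q g) (g 1, algebraMap R S x * g 2)

def planeST (g : Fin 2 → S) : S × S :=
  nagataInv (algebraMap R S (constantCoeff q)) (g 0, algebraMap R S x * g 1)

def scaledEval (st : S × S) : S := evalPair q (algebraMap R S x * st.1, algebraMap R S x * st.2)

/-- The coordinates `(a, b)` of a point `g = (y, z, u)` of the hypersurface. Points are taken with
values in an arbitrary `R`-algebra, so that at the generic points `X` these maps and their inverse
`venereauParam` give the algebra homomorphisms of the isomorphism. -/
def venereauCoord (g : Fin 3 → S) : Fin 2 → S :=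
  ![(nagata (algebraMap R S (constantCoeff q)) (venereauST x q g)).1,
    g 2 - evalPair N (venereauST x q g)]

def venereauParam (g : Fin 2 → S) : Fin 3 → S :=
  ![-(algebraMap R S x * scaledEval x q (planeST x q g)),
    (nagata (scaledEval x q (planeST x q g)) (planeST x q g)).1,
    g 1 + evalPair N (planeST x q g)]

theorem map_venereauQ (F : S →ₐ[R] T) (g : Fin 3 → S) :
    F (venereauQ x q g) = venereauQ x q (F ∘ g) := by
  simp [venereauQ, map_evalPair, venereauV, venereauW, map_ofNat]

theorem map_venereauEval (F : S →ₐ[R] T) (g : Fin 3 → S) :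
    F (venereauEval x q g) = venereauEval x q (F ∘ g) := by
  simp [venereauEval, map_venereauQ]

theorem map_venereauCoord (F : S →ₐ[R] T) (g : Fin 3 → S) :
    F ∘ venereauCoord x q N g = venereauCoord x q N (F ∘ g) := by
  have hst : Prod.map F F (venereauST x q g) = venereauST x q (F ∘ g) := by
    simp [venereauST, map_nagataInv, map_venereauQ]
  funext i
  fin_cases i <;> simp [venereauCoord, ← hst, map_nagata_fst, map_evalPair]

theorem map_scaledEval (F : S →ₐ[R] T) (st : S × S) :
    F (scaledEval x q st) = scaledEval x q (Prod.map F F st) := by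
  simp [scaledEval, map_evalPair]

theorem map_venereauParam (F : S →ₐ[R] T) (g : Fin 2 → S) :
    F ∘ venereauParam x q N g = venereauParam x q N (F ∘ g) := by
  have hst : Prod.map F F (planeST x q g) = planeST x q (F ∘ g) := by
    simp [planeST, map_nagataInv]
  funext i
  fin_cases i <;> simp [venereauParam, ← hst, map_nagata_fst, map_evalPair, map_scaledEval]

theorem dvd_scaledEval_sub_constantCoeff :
    algebraMap R (MvPolynomial (Fin 2) R) x ∣
      scaledEval x q (X 0, X 1) - algebraMap R _ (constantCoeff q) := by
  set I := Ideal.span {algebraMap R (MvPolynomial (Fin 2) R) x}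
  have hX (i : Fin 2) : Ideal.Quotient.mkₐ R I (algebraMap R _ x * X i) = 0 := by
    rw [Ideal.Quotient.mkₐ_eq_mk, Ideal.Quotient.eq_zero_iff_mem]
    exact Ideal.mem_span_singleton.mpr (dvd_mul_right _ _)
  rw [← Ideal.mem_span_singleton, ← Ideal.Quotient.eq, ← Ideal.Quotient.mkₐ_eq_mk R,
    scaledEval, map_evalPair, AlgHom.commutes]
  simp only [Prod.map, evalPair]
  rw [← aeval_zero]
  congr 2
  funext i
  fin_cases i <;> exact hX _

def IsNagataCorrection : Prop :=
  algebraMap R _ x * N = (nagata (scaledEval x q (X 0, X 1)) (X 0, X 1)).2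
    - (nagata (algebraMap R _ (constantCoeff q)) (X 0, X 1)).2

theorem exists_isNagataCorrection : ∃ N, IsNagataCorrection x q N :=
  have ⟨N, hN⟩ := (dvd_scaledEval_sub_constantCoeff x q).trans (sub_dvd_nagata_snd_sub _ _ _)
  ⟨N, hN.symm⟩

variable {x q N}

theorem IsNagataCorrection.evalPair (hN : IsNagataCorrection x q N) (st : S × S) :
    algebraMap R S x * evalPair N st =
      (nagata (scaledEval x q st) st).2 - (nagata (algebraMap R S (constantCoeff q)) st).2 := by
  set F : MvPolynomial (Fin 2) R →ₐ[R] S := aeval ![st.1, st.2]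
  have hF : Prod.map F F (X 0, X 1) = st := by
    ext <;> simp [F]
  have h := congrArg F hN
  rw [map_sub, map_mul, AlgHom.commutes, map_nagata_snd, map_nagata_snd, map_scaledEval,
    AlgHom.commutes, hF] at h
  exact h

theorem venereauST_venereauParam (hN : IsNagataCorrection x q N) (g : Fin 2 → S) :
    venereauQ x q (venereauParam x q N g) = scaledEval x q (planeST x q g) ∧
      venereauST x q (venereauParam x q N g) = planeST x q g := by
  set st := planeST x q g
  set k := scaledEval x q st
  have hplane : nagata (algebraMap R S (constantCoeff q)) st = (g 0, algebraMap R S x * g 1) :=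
    nagata_nagataInv _ _
  have hzu : (venereauParam x q N g 1, algebraMap R S x * venereauParam x q N g 2) =
      nagata k st := by
    have h := hN.evalPair st
    rw [hplane] at h
    ext
    · rfl
    · simp only [venereauParam, Matrix.cons_val_two, Matrix.head_cons, Matrix.tail_cons]
      linear_combination h
  have hy : venereauParam x q N g 0 = -(algebraMap R S x * k) := rfl
  have hQ : venereauQ x q (venereauParam x q N g) = k := by
    rw [venereauQ, venereauV_eq_of_eq_neg_mul hy, venereauW_eq_of_eq_neg_mul hy, hzu,
      nagataInv_nagata]
    rfl
  refine ⟨hQ, ?_⟩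
  rw [venereauST, hQ, hzu, nagataInv_nagata]

theorem venereauEval_venereauParam (hN : IsNagataCorrection x q N) (g : Fin 2 → S) :
    venereauEval x q (venereauParam x q N g) = 0 := by
  rw [venereauEval, (venereauST_venereauParam hN g).1, venereauParam, Matrix.cons_val_zero]
  ring

theorem venereauCoord_venereauParam (hN : IsNagataCorrection x q N) (g : Fin 2 → S) :
    venereauCoord x q N (venereauParam x q N g) = g := by
  have hst := (venereauST_venereauParam hN g).2
  funext i
  fin_cases i
  · show (nagata _ (venereauST x q (venereauParam x q N g))).1 = g 0
    rw [hst, planeST, nagata_nagataInv]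
  · show g 1 + evalPair N (planeST x q g) - evalPair N (venereauST x q (venereauParam x q N g))
      = g 1
    rw [hst]
    ring

theorem venereauParam_venereauCoord (hN : IsNagataCorrection x q N) {g : Fin 3 → S}
    (hg : venereauEval x q g = 0) : venereauParam x q N (venereauCoord x q N g) = g := by
  set st := venereauST x q g
  have hy : g 0 = -(algebraMap R S x * venereauQ x q g) := by
    rw [venereauEval] at hg
    linear_combination hg
  have hQ : venereauQ x q g = scaledEval x q st := by
    rw [venereauQ, venereauV_eq_of_eq_neg_mul hy, venereauW_eq_of_eq_neg_mul hy]
    rfl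
  have hzu : nagata (scaledEval x q st) st = (g 1, algebraMap R S x * g 2) := by
    rw [← hQ]
    exact nagata_nagataInv _ _
  have hplane : planeST x q (venereauCoord x q N g) = st := by
    have h := hN.evalPair st
    rw [hzu] at h
    rw [planeST, ← nagataInv_nagata (algebraMap R S (constantCoeff q)) st]
    congr 1
    ext
    · rfl
    · show algebraMap R S x * (g 2 - evalPair N st) = _
      linear_combination -h
  funext i
  fin_cases i
  · show -(algebraMap R S x * scaledEval x q (planeST x q (venereauCoord x q N g))) = g 0
    rw [hplane, hy, hQ]
  · show (nagata (scaledEval x q (planeST x q _)) (planeST x q (venereauCoord x q N g))).1 = g 1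
    rw [hplane, hzu]
  · show g 2 - evalPair N st + evalPair N (planeST x q (venereauCoord x q N g)) = g 2
    rw [hplane]
    ring

end Correspondence

theorem nonempty_quotient_span_singleton_algEquiv {R A B : Type*} [CommRing R] [CommRing A]
    [CommRing B] [Algebra R A] [Algebra R B] {f : A} (φ : A →ₐ[R] B) (ψ : B →ₐ[R] A)
    (hf : φ f = 0) (hφψ : φ.comp ψ = AlgHom.id R B)
    (hψφ : (Ideal.Quotient.mkₐ R (Ideal.span {f})).comp (ψ.comp φ) = Ideal.Quotient.mkₐ R _) :
    Nonempty ((A ⧸ Ideal.span {f}) ≃ₐ[R] B) := by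
  have hker : RingHom.ker φ = Ideal.span {f} := by
    refine le_antisymm (fun a ha => ?_) (Ideal.span_le.mpr (by simpa using hf))
    rw [← Ideal.Quotient.eq_zero_iff_mem, ← Ideal.Quotient.mkₐ_eq_mk R, ← hψφ,
      AlgHom.comp_apply, AlgHom.comp_apply, RingHom.mem_ker.mp ha, map_zero, map_zero]
  exact ⟨(Ideal.quotientEquivAlgOfEq R hker.symm).trans
    (Ideal.quotientKerAlgEquivOfRightInverse (g := ψ) (AlgHom.congr_fun hφψ))⟩

theorem nonempty_algEquiv_venereau {R : Type*} [CommRing R] (x : R) (q : MvPolynomial (Fin 2) R) :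
    Nonempty ((MvPolynomial (Fin 3) R ⧸ Ideal.span {venereauPoly x q}) ≃ₐ[R]
      MvPolynomial (Fin 2) R) := by
  obtain ⟨N, hN⟩ := exists_isNagataCorrection x q
  set φ : MvPolynomial (Fin 3) R →ₐ[R] MvPolynomial (Fin 2) R := aeval (venereauParam x q N X)
  set ψ : MvPolynomial (Fin 2) R →ₐ[R] MvPolynomial (Fin 3) R := aeval (venereauCoord x q N X)
  set π := Ideal.Quotient.mkₐ R (Ideal.span {venereauPoly x q})
  have hφX : φ ∘ X = venereauParam x q N X := funext (aeval_X _)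
  have hψX : ψ ∘ X = venereauCoord x q N X := funext (aeval_X _)
  refine nonempty_quotient_span_singleton_algEquiv φ ψ ?_ ?_ ?_
  · rw [venereauPoly, map_venereauEval, hφX, venereauEval_venereauParam hN]
  · refine algHom_ext fun i => ?_
    rw [AlgHom.comp_apply, aeval_X, ← Function.comp_apply (f := φ), map_venereauCoord, hφX,
      venereauCoord_venereauParam hN, AlgHom.id_apply]
  · have hπ : venereauEval x q (π ∘ X) = 0 := by
      rw [← map_venereauEval, ← venereauPoly, Ideal.Quotient.mkₐ_eq_mk,
        Ideal.Quotient.eq_zero_iff_mem]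
      exact Ideal.subset_span rfl
    refine algHom_ext fun i => ?_
    have hπψ : (π.comp ψ) ∘ X = venereauCoord x q N (π ∘ X) := by
      rw [← map_venereauCoord, ← hψX]; rfl
    rw [AlgHom.comp_apply, AlgHom.comp_apply, aeval_X, ← AlgHom.comp_apply,
      ← Function.comp_apply (f := π.comp ψ), map_venereauParam, hπψ,
      venereauParam_venereauCoord hN hπ]
    rfl

/-- Every Vénéreau-type polynomial f = y + xQ with Q ∈ R[v,w], R = ℂ[x], is an
R-hyperplane: R[y,z,u]/(f) is R-isomorphic to R^[2]. -/
theorem stmt17 :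
    let R := Polynomial ℂ
    let y : MvPolynomial (Fin 3) R := X 0
    let z : MvPolynomial (Fin 3) R := X 1
    let u : MvPolynomial (Fin 3) R := X 2
    let x : MvPolynomial (Fin 3) R := C Polynomial.X
    let p := y * u + z ^ 2
    let v := x * z + y * p
    let w := x ^ 2 * u - 2 * x * z * p - y * p ^ 2
    ∀ Q ∈ Algebra.adjoin R ({v, w} : Set (MvPolynomial (Fin 3) R)),
      Nonempty ((MvPolynomial (Fin 3) R ⧸
          Ideal.span ({y + x * Q} : Set (MvPolynomial (Fin 3) R))) ≃ₐ[R]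
        MvPolynomial (Fin 2) R) := by
  intro R y z u x p v w Q hQ
  rw [← Matrix.range_cons_cons_empty v w ![], Algebra.adjoin_range_eq_range_aeval] at hQ
  obtain ⟨q, rfl⟩ := hQ
  exact nonempty_algEquiv_venereau Polynomial.X q
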